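/- The function g(t) = ln|e^{it} + 2| − ln|e^{it} − 1| (defined for t not a multiple of 2π) satisfies g(2π/3) = 0 and g′(2π/3) = −√3/2. Consequently the correlation length ξ(t) = 1/|g(t)| diverges at the transition point t_c = 2π/3 as |t − t_c|^{−1}: precisely, |t − 2π/3|·ξ(t)⁻¹ → √3/2, i.e., ξ(t) ~ (2/√3)·|t − 2π/3|^{−1} as t → 2π/3. -/

import Mathlib

open Complex Real Filter

/-- `g(t) = ln|e^{it}+2| − ln|e^{it}−1|`, the inverse correlation length (up to
sign) of the 3-state Potts chain after the quench, with `ξ(t) = 1/|g(t)|`. -/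
noncomputable def pottsG (t : ℝ) : ℝ :=
  Real.log ‖Complex.exp (t * I) + 2‖ -
    Real.log ‖Complex.exp (t * I) - 1‖

/-!
On the unit circle `|e^{it} + a|² = 1 + 2a cos t + a²`, so
`g t = (log (5 + 4 cos t) - log (2 - 2 cos t)) / 2`. At `t = 2π/3` both moduli equal `√3`, so
`g` vanishes there and `|g t| / |t - 2π/3|` is the modulus of a difference quotient of `g`,
which tends to `|g′(2π/3)| = √3/2`.
-/

open Topology

theorem HasDerivAt.tendsto_norm_div_norm_sub {𝕜 F : Type*} [NontriviallyNormedField 𝕜]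
    [NormedAddCommGroup F] [NormedSpace 𝕜 F] {f : 𝕜 → F} {f' : F} {a : 𝕜}
    (hf : HasDerivAt f f' a) (ha : f a = 0) :
    Tendsto (fun t => ‖f t‖ / ‖t - a‖) (𝓝[≠] a) (𝓝 ‖f'‖) := by
  refine ((hasDerivAt_iff_tendsto_slope.mp hf).norm).congr fun t => ?_
  rw [slope_def_module, ha, sub_zero, norm_smul, norm_inv, inv_mul_eq_div]

theorem Complex.normSq_exp_ofReal_mul_I_add_ofReal (t a : ℝ) :
    normSq (exp (t * I) + a) = 1 + 2 * a * Real.cos t + a ^ 2 := by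
  rw [normSq_apply]
  simp only [add_re, add_im, exp_ofReal_mul_I_re, exp_ofReal_mul_I_im, ofReal_re, ofReal_im]
  linear_combination Real.sin_sq_add_cos_sq t

theorem Real.log_norm_exp_ofReal_mul_I_add_ofReal (t a : ℝ) :
    Real.log ‖Complex.exp (t * I) + a‖ = Real.log (1 + 2 * a * Real.cos t + a ^ 2) / 2 := by
  rw [← normSq_exp_ofReal_mul_I_add_ofReal, norm_def, Real.log_sqrt (normSq_nonneg _)]

theorem pottsG_eq_log_sub_log (t : ℝ) :
    pottsG t = (Real.log (5 + 4 * Real.cos t) - Real.log (2 - 2 * Real.cos t)) / 2 := by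
  have h2 := Real.log_norm_exp_ofReal_mul_I_add_ofReal t 2
  have h1 := Real.log_norm_exp_ofReal_mul_I_add_ofReal t (-1)
  push_cast at h1 h2
  rw [pottsG, sub_eq_add_neg (Complex.exp _), h2, h1]
  ring_nf

theorem hasDerivAt_pottsG {t : ℝ} (ht : Real.cos t ≠ 1) :
    HasDerivAt pottsG (-9 * Real.sin t / ((5 + 4 * Real.cos t) * (2 - 2 * Real.cos t))) t := by
  have hplus : 5 + 4 * Real.cos t ≠ 0 := by nlinarith [Real.neg_one_le_cos t]
  have hminus : 2 - 2 * Real.cos t ≠ 0 := fun h => ht (by linarith)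
  have hcos := Real.hasDerivAt_cos t
  have hlog := (((hcos.const_mul 4).const_add 5).log hplus).sub
    (((hcos.const_mul 2).const_sub 2).log hminus) |>.div_const 2
  rw [funext pottsG_eq_log_sub_log]
  refine hlog.congr_deriv ?_
  field_simp
  ring

theorem Real.cos_two_pi_div_three : Real.cos (2 * π / 3) = -(1 / 2) := by
  rw [show 2 * π / 3 = π - π / 3 by ring, Real.cos_pi_sub, Real.cos_pi_div_three]

theorem Real.sin_two_pi_div_three : Real.sin (2 * π / 3) = √3 / 2 := by
  rw [show 2 * π / 3 = π - π / 3 by ring, Real.sin_pi_sub, Real.sin_pi_div_three]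

/-- `g(2π/3) = 0`, `g′(2π/3) = −√3/2`, and hence the correlation length
`ξ(t) = 1/|g(t)|` diverges at `t_c = 2π/3` as
`ξ(t) ~ (2/√3)·|t − 2π/3|⁻¹`, i.e. `ξ(t)⁻¹/|t − 2π/3| → √3/2`. -/
theorem stmt_15 :
    pottsG (2 * π / 3) = 0 ∧
    HasDerivAt pottsG (-(Real.sqrt 3) / 2) (2 * π / 3) ∧
    Filter.Tendsto (fun t : ℝ => |pottsG t| / |t - 2 * π / 3|)
      (nhdsWithin (2 * π / 3) {(2 * π / 3 : ℝ)}ᶜ)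
      (nhds (Real.sqrt 3 / 2)) := by
  have hzero : pottsG (2 * π / 3) = 0 := by
    rw [pottsG_eq_log_sub_log, Real.cos_two_pi_div_three]
    norm_num
  have hderiv : HasDerivAt pottsG (-√3 / 2) (2 * π / 3) := by
    convert hasDerivAt_pottsG (t := 2 * π / 3) (by rw [Real.cos_two_pi_div_three]; norm_num)
      using 1
    rw [Real.cos_two_pi_div_three, Real.sin_two_pi_div_three]
    ring
  refine ⟨hzero, hderiv, ?_⟩
  simpa only [Real.norm_eq_abs, abs_div, abs_neg, abs_of_nonneg (Real.sqrt_nonneg 3), abs_two]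
    using hderiv.tendsto_norm_div_norm_sub hzero
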